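/- arXiv:2309.11583 — 6 statements merged into one kernel-verified Lean document; each statement's English description precedes it below -/
import Mathlib

section
/- Let B be a unital associative ℂ-algebra with four pairwise commuting ℂ-linear derivations ∂₀, ∂₁, ∂₂, ∂₃. Let Λ be the exterior ℂ-algebra on four generators dx⁰, dx¹, dx², dx³ and let Ω := B ⊗_ℂ Λ with multiplication (a⊗ω)(b⊗η) := ab ⊗ ω∧η and ℂ-linear differential d determined by d(b⊗ω) := Σ_μ ∂_μ(b) ⊗ dx^μ∧ω on elements with ω a product of generators. Given φ, A₁, A₂, A₃ ∈ B, set A♭ := φ⊗dx⁰ − A₁⊗dx¹ − A₂⊗dx² − A₃⊗dx³. Then F♭ := dA♭ − i·A♭·A♭ equals D₁⊗dx⁰∧dx¹ + D₂⊗dx⁰∧dx² + D₃⊗dx⁰∧dx³ − H₃⊗dx¹∧dx² + H₂⊗dx¹∧dx³ − H₁⊗dx²∧dx³, where D and H are the noncommutative electric and magnetic fields of the potential (φ,A). -/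
/-!
Write `A♭ = ∑_μ a_μ ⊗ dx^μ` with `a = (φ, -A₁, -A₂, -A₃)`. For 1-forms `α = ∑ a_μ ⊗ dx^μ`,
`β = ∑ b_ν ⊗ dx^ν` both `dα` and `αβ` are double sums `∑_{μ,ν} c_{μν} ⊗ dx^μ dx^ν`, which the
relations `dx^μ dx^ν = -dx^ν dx^μ`, `(dx^μ)² = 0` collapse to `∑_{μ<ν} (c_{μν} - c_{νμ}) ⊗ dx^μ dx^ν`.
Hence `F♭ = ∑_{μ<ν} F_{μν} ⊗ dx^μ dx^ν` with `F_{μν} = ∂_μ a_ν - ∂_ν a_μ - i (a_μ a_ν - a_ν a_μ)`,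
and one reads off `F_{0k} = D_k` and `F_{jk} = -ε_{jkl} H_l`.
-/

noncomputable section

namespace NC

variable {B : Type*} [Ring B] [Algebra ℂ B]

/-- A ℂ-linear derivation of the (possibly noncommutative) ℂ-algebra `B`,
given as a plain function together with its defining properties. -/
structure IsDer (δ : B → B) : Prop where
  map_add : ∀ a b : B, δ (a + b) = δ a + δ b
  map_smul : ∀ (c : ℂ) (a : B), δ (c • a) = c • δ a
  leibniz : ∀ a b : B, δ (a * b) = δ a * b + a * δ b

/-- divergence `∇·X` of a triple. -/
def divg (d1 d2 d3 : B → B) (X : B × B × B) : B := d1 X.1 + d2 X.2.1 + d3 X.2.2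

/-- curl `∇×X` of a triple. -/
def curl (d1 d2 d3 : B → B) (X : B × B × B) : B × B × B :=
  (d2 X.2.2 - d3 X.2.1, d3 X.1 - d1 X.2.2, d1 X.2.1 - d2 X.1)

/-- gradient `∇a`. -/
def grad (d1 d2 d3 : B → B) (a : B) : B × B × B := (d1 a, d2 a, d3 a)

/-- apply a derivation componentwise to a triple, e.g. `∂₀X`. -/
def dmap (d0 : B → B) (X : B × B × B) : B × B × B := (d0 X.1, d0 X.2.1, d0 X.2.2)

/-- ordered cross product `X×Y` (multiplication from top to bottom). -/
def cross (X Y : B × B × B) : B × B × B :=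
  (X.2.1 * Y.2.2 - X.2.2 * Y.2.1, X.2.2 * Y.1 - X.1 * Y.2.2, X.1 * Y.2.1 - X.2.1 * Y.1)

/-- componentwise commutator `[a,X] = (aX_k - X_k a)_k`. -/
def commS (a : B) (X : B × B × B) : B × B × B :=
  (a * X.1 - X.1 * a, a * X.2.1 - X.2.1 * a, a * X.2.2 - X.2.2 * a)

/-- componentwise commutator `[X,a] = (X_k a - a X_k)_k`. -/
def commR (X : B × B × B) (a : B) : B × B × B :=
  (X.1 * a - a * X.1, X.2.1 * a - a * X.2.1, X.2.2 * a - a * X.2.2)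

/-- scalar commutator `[X,Y] = Σ_k (X_k Y_k - Y_k X_k)`. -/
def commV (X Y : B × B × B) : B :=
  (X.1 * Y.1 - Y.1 * X.1) + (X.2.1 * Y.2.1 - Y.2.1 * X.2.1) +
    (X.2.2 * Y.2.2 - Y.2.2 * X.2.2)

/-- classical part of the electric field: `E = -∂₀A - ∇φ`. -/
def Efield (d0 d1 d2 d3 : B → B) (φ : B) (A : B × B × B) : B × B × B :=
  -dmap d0 A - grad d1 d2 d3 φ

/-- classical part of the magnetic field: `Bf = ∇×A`. -/
def Bfield (d1 d2 d3 : B → B) (A : B × B × B) : B × B × B := curl d1 d2 d3 A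

/-- the noncommutative electric field `D = E + i[φ,A]`. -/
def Dfield (d0 d1 d2 d3 : B → B) (φ : B) (A : B × B × B) : B × B × B :=
  Efield d0 d1 d2 d3 φ A + Complex.I • commS φ A

/-- the noncommutative magnetic field `H = Bf + i(A×A)`. -/
def Hfield (d1 d2 d3 : B → B) (A : B × B × B) : B × B × B :=
  Bfield d1 d2 d3 A + Complex.I • cross A A

end NC


namespace NC

open scoped TensorProduct

/-- the exterior ℂ-algebra on four generators `dx⁰,…,dx³`. -/
abbrev Lam4 : Type := ExteriorAlgebra ℂ (Fin 4 → ℂ)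

/-- the generator `dx^μ` of the exterior algebra. -/
noncomputable def dx (μ : Fin 4) : Lam4 := ExteriorAlgebra.ι ℂ (Pi.single μ 1)

/-- `Ω := B ⊗_ℂ Λ`, the quantum differential forms, with multiplication
`(a⊗ω)(b⊗η) = ab ⊗ ω∧η`. -/
abbrev OmegaB (B : Type*) [Ring B] [Algebra ℂ B] : Type _ := B ⊗[ℂ] Lam4

/-- the differential `d(b⊗ω) = Σ_μ ∂_μ(b) ⊗ dx^μ∧ω`. -/
noncomputable def dOp {B : Type*} [Ring B] [Algebra ℂ B]
    (der : Fin 4 → (B →ₗ[ℂ] B)) : OmegaB B →ₗ[ℂ] OmegaB B :=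
  ∑ μ : Fin 4, TensorProduct.map (der μ) (LinearMap.mulLeft ℂ (dx μ))

/-- the potential 1-form `A♭ = φ⊗dx⁰ - A₁⊗dx¹ - A₂⊗dx² - A₃⊗dx³`. -/
noncomputable def Aflat {B : Type*} [Ring B] [Algebra ℂ B]
    (φ : B) (A : B × B × B) : OmegaB B :=
  φ ⊗ₜ[ℂ] dx 0 - A.1 ⊗ₜ[ℂ] dx 1 - A.2.1 ⊗ₜ[ℂ] dx 2 - A.2.2 ⊗ₜ[ℂ] dx 3

/-- the field strength `F♭ = dA♭ - i·A♭·A♭`. -/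
noncomputable def Fflat {B : Type*} [Ring B] [Algebra ℂ B]
    (der : Fin 4 → (B →ₗ[ℂ] B)) (φ : B) (A : B × B × B) : OmegaB B :=
  dOp der (Aflat φ A) - Complex.I • (Aflat φ A * Aflat φ A)

lemma dx_mul_self (μ : Fin 4) : dx μ * dx μ = 0 := ExteriorAlgebra.ι_sq_zero _

lemma dx_mul_dx_comm (μ ν : Fin 4) : dx ν * dx μ = -(dx μ * dx ν) :=
  eq_neg_of_add_eq_zero_left (ExteriorAlgebra.ι_add_mul_swap _ _)

section Forms

variable {B : Type*} [Ring B] [Algebra ℂ B]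

def oneForm (a : Fin 4 → B) : OmegaB B := ∑ μ, a μ ⊗ₜ[ℂ] dx μ

def twoForm (F : Fin 4 → Fin 4 → B) : OmegaB B :=
  ∑ μ, ∑ ν ∈ Finset.Ioi μ, F μ ν ⊗ₜ[ℂ] (dx μ * dx ν)

lemma twoForm_eq (F : Fin 4 → Fin 4 → B) :
    twoForm F = F 0 1 ⊗ₜ[ℂ] (dx 0 * dx 1) + F 0 2 ⊗ₜ[ℂ] (dx 0 * dx 2) +
      F 0 3 ⊗ₜ[ℂ] (dx 0 * dx 3) + F 1 2 ⊗ₜ[ℂ] (dx 1 * dx 2) +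
      F 1 3 ⊗ₜ[ℂ] (dx 1 * dx 3) + F 2 3 ⊗ₜ[ℂ] (dx 2 * dx 3) := by
  have h0 : Finset.Ioi (0 : Fin 4) = {1, 2, 3} := by decide
  have h1 : Finset.Ioi (1 : Fin 4) = {2, 3} := by decide
  have h2 : Finset.Ioi (2 : Fin 4) = {3} := by decide
  have h3 : Finset.Ioi (3 : Fin 4) = ∅ := by decide
  simp only [twoForm, Fin.sum_univ_four, h0, h1, h2, h3, Finset.sum_insert, Finset.mem_insert,
    Finset.mem_singleton, Fin.reduceEq, or_self, not_false_eq_true, Finset.sum_singleton,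
    Finset.sum_empty, add_zero]
  abel

lemma twoForm_sub_smul (F G : Fin 4 → Fin 4 → B) (c : ℂ) :
    twoForm F - c • twoForm G = twoForm (F - c • G) := by
  simp only [twoForm, Finset.smul_sum, ← Finset.sum_sub_distrib, Pi.sub_apply, Pi.smul_apply,
    TensorProduct.sub_tmul, TensorProduct.smul_tmul']

lemma sum_sum_tmul_dx_mul_dx (c : Fin 4 → Fin 4 → B) :
    ∑ μ, ∑ ν, c μ ν ⊗ₜ[ℂ] (dx μ * dx ν) = twoForm fun μ ν ↦ c μ ν - c ν μ := by
  rw [twoForm_eq]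
  simp only [Fin.sum_univ_four, dx_mul_self, dx_mul_dx_comm 0 1, dx_mul_dx_comm 0 2,
    dx_mul_dx_comm 0 3, dx_mul_dx_comm 1 2, dx_mul_dx_comm 1 3, dx_mul_dx_comm 2 3,
    TensorProduct.tmul_zero, TensorProduct.tmul_neg, TensorProduct.sub_tmul]
  abel

lemma dOp_oneForm (der : Fin 4 → (B →ₗ[ℂ] B)) (a : Fin 4 → B) :
    dOp der (oneForm a) = twoForm fun μ ν ↦ der μ (a ν) - der ν (a μ) := by
  rw [← sum_sum_tmul_dx_mul_dx, Finset.sum_comm]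
  simp [dOp, oneForm]

lemma oneForm_mul_oneForm (a b : Fin 4 → B) :
    oneForm a * oneForm b = twoForm fun μ ν ↦ a μ * b ν - a ν * b μ := by
  rw [← sum_sum_tmul_dx_mul_dx]
  simp [oneForm, Finset.sum_mul_sum]

def fieldStrength (der : Fin 4 → (B →ₗ[ℂ] B)) (a : Fin 4 → B) (μ ν : Fin 4) : B :=
  der μ (a ν) - der ν (a μ) - Complex.I • (a μ * a ν - a ν * a μ)

lemma dOp_sub_I_smul_oneForm_mul_self (der : Fin 4 → (B →ₗ[ℂ] B)) (a : Fin 4 → B) :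
    dOp der (oneForm a) - Complex.I • (oneForm a * oneForm a) =
      twoForm (fieldStrength der a) := by
  rw [dOp_oneForm, oneForm_mul_oneForm, twoForm_sub_smul]
  rfl

lemma Aflat_eq_oneForm (φ : B) (A : B × B × B) :
    Aflat φ A = oneForm ![φ, -A.1, -A.2.1, -A.2.2] := by
  simp [Aflat, oneForm, Fin.sum_univ_four, sub_eq_add_neg, TensorProduct.neg_tmul]

variable (der : Fin 4 → (B →ₗ[ℂ] B)) (φ : B) (A : B × B × B)

lemma fieldStrength_time_space :
    (fieldStrength der ![φ, -A.1, -A.2.1, -A.2.2] 0 1,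
      fieldStrength der ![φ, -A.1, -A.2.1, -A.2.2] 0 2,
      fieldStrength der ![φ, -A.1, -A.2.1, -A.2.2] 0 3) =
      Dfield (der 0) (der 1) (der 2) (der 3) φ A := by
  simp only [fieldStrength, Dfield, Efield, dmap, grad, commS, Matrix.cons_val, Matrix.cons_val_one,
    Matrix.cons_val_zero, map_neg, mul_neg, neg_mul, sub_neg_eq_add, Prod.neg_mk, Prod.mk_sub_mk,
    Prod.smul_mk, Prod.mk_add_mk, Prod.mk.injEq]
  refine ⟨?_, ?_, ?_⟩ <;> module

lemma fieldStrength_space_space :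
    (-fieldStrength der ![φ, -A.1, -A.2.1, -A.2.2] 2 3,
      fieldStrength der ![φ, -A.1, -A.2.1, -A.2.2] 1 3,
      -fieldStrength der ![φ, -A.1, -A.2.1, -A.2.2] 1 2) =
      Hfield (der 1) (der 2) (der 3) A := by
  simp only [fieldStrength, Hfield, Bfield, curl, cross, Matrix.cons_val, Matrix.cons_val_one,
    Matrix.cons_val_zero, map_neg, mul_neg, neg_mul, sub_neg_eq_add, Prod.smul_mk, Prod.mk_add_mk,
    Prod.mk.injEq]
  refine ⟨?_, ?_, ?_⟩ <;> module

end Forms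

theorem nc_field_strength_components_general {B : Type*} [Ring B] [Algebra ℂ B]
    (der : Fin 4 → (B →ₗ[ℂ] B))
    (φ : B) (A : B × B × B) :
    Fflat der φ A =
      (Dfield ⇑(der 0) ⇑(der 1) ⇑(der 2) ⇑(der 3) φ A).1 ⊗ₜ[ℂ] (dx 0 * dx 1) +
      (Dfield ⇑(der 0) ⇑(der 1) ⇑(der 2) ⇑(der 3) φ A).2.1 ⊗ₜ[ℂ] (dx 0 * dx 2) +
      (Dfield ⇑(der 0) ⇑(der 1) ⇑(der 2) ⇑(der 3) φ A).2.2 ⊗ₜ[ℂ] (dx 0 * dx 3) -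
      (Hfield ⇑(der 1) ⇑(der 2) ⇑(der 3) A).2.2 ⊗ₜ[ℂ] (dx 1 * dx 2) +
      (Hfield ⇑(der 1) ⇑(der 2) ⇑(der 3) A).2.1 ⊗ₜ[ℂ] (dx 1 * dx 3) -
      (Hfield ⇑(der 1) ⇑(der 2) ⇑(der 3) A).1 ⊗ₜ[ℂ] (dx 2 * dx 3) := by
  rw [Fflat, Aflat_eq_oneForm, dOp_sub_I_smul_oneForm_mul_self, twoForm_eq,
    ← fieldStrength_time_space, ← fieldStrength_space_space]
  simp only [TensorProduct.neg_tmul]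
  abel

/-- **Components of the noncommutative field strength**:
`F♭ = dA♭ - i·A♭·A♭
   = D₁⊗dx⁰∧dx¹ + D₂⊗dx⁰∧dx² + D₃⊗dx⁰∧dx³ - H₃⊗dx¹∧dx² + H₂⊗dx¹∧dx³ - H₁⊗dx²∧dx³`,
where `D = E + i[φ,A]` and `H = Bf + i(A×A)` are the noncommutative electric and
magnetic fields of the potential `(φ,A)`. -/
theorem nc_field_strength_components {B : Type*} [Ring B] [Algebra ℂ B]
    (der : Fin 4 → (B →ₗ[ℂ] B))
    (hleib : ∀ μ : Fin 4, ∀ a b : B, der μ (a * b) = der μ a * b + a * der μ b)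
    (hcomm : ∀ μ ν : Fin 4, ∀ x : B, der μ (der ν x) = der ν (der μ x))
    (φ : B) (A : B × B × B) :
    Fflat der φ A =
      (Dfield ⇑(der 0) ⇑(der 1) ⇑(der 2) ⇑(der 3) φ A).1 ⊗ₜ[ℂ] (dx 0 * dx 1) +
      (Dfield ⇑(der 0) ⇑(der 1) ⇑(der 2) ⇑(der 3) φ A).2.1 ⊗ₜ[ℂ] (dx 0 * dx 2) +
      (Dfield ⇑(der 0) ⇑(der 1) ⇑(der 2) ⇑(der 3) φ A).2.2 ⊗ₜ[ℂ] (dx 0 * dx 3) -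
      (Hfield ⇑(der 1) ⇑(der 2) ⇑(der 3) A).2.2 ⊗ₜ[ℂ] (dx 1 * dx 2) +
      (Hfield ⇑(der 1) ⇑(der 2) ⇑(der 3) A).2.1 ⊗ₜ[ℂ] (dx 1 * dx 3) -
      (Hfield ⇑(der 1) ⇑(der 2) ⇑(der 3) A).1 ⊗ₜ[ℂ] (dx 2 * dx 3) :=
  nc_field_strength_components_general der φ A

end NC
end
end

section
/- (Noncommutative Gauss law for magnetism.) Let B be a unital associative ℂ-algebra with four pairwise commuting ℂ-linear derivations ∂₀, ∂₁, ∂₂, ∂₃, let φ ∈ B and A = (A₁,A₂,A₃) be arbitrary, and let Bf, D, H be as defined below. Then ∇·H = i[Bf,A], where [Bf,A] := Σ_{k=1}^{3} (Bf_k A_k − A_k Bf_k). In particular the noncommutative magnetic charge density ρ^m := i[Bf,A] is produced by every gauge potential. -/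
noncomputable section

/-!
Both terms of `∇·H = ∇·(∇×A) + i ∇·(A×A)` are computed by the Leibniz rule. Since the spatial
derivations commute, `∇·(∇×A) = 0`. The ordered cross product obeys
`∇·(X×Y) = (∇×X)·Y − X·(∇×Y)` with order-preserving dot products, and for `X = Y = A` the right
side is the scalar commutator `[∇×A, A]`.
-/

namespace NC

section

variable {B : Type*} [Ring B]

def dot (X Y : B × B × B) : B := X.1 * Y.1 + X.2.1 * Y.2.1 + X.2.2 * Y.2.2

theorem commV_eq_dot_sub_dot (X Y : B × B × B) : commV X Y = dot X Y - dot Y X := by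
  simp only [commV, dot]
  abel

variable [Algebra ℂ B]

namespace IsDer

variable {δ : B → B}

theorem map_neg (h : IsDer δ) (a : B) : δ (-a) = -δ a := by
  simpa using h.map_smul (-1) a

theorem map_sub (h : IsDer δ) (a b : B) : δ (a - b) = δ a - δ b := by
  rw [sub_eq_add_neg, h.map_add, h.map_neg, ← sub_eq_add_neg]

end IsDer

section VectorCalculus

variable {d1 d2 d3 : B → B} (h1 : IsDer d1) (h2 : IsDer d2) (h3 : IsDer d3)
include h1 h2 h3

theorem divg_add (X Y : B × B × B) :
    divg d1 d2 d3 (X + Y) = divg d1 d2 d3 X + divg d1 d2 d3 Y := by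
  simp only [divg, Prod.fst_add, Prod.snd_add, h1.map_add, h2.map_add, h3.map_add]
  abel

theorem divg_smul (c : ℂ) (X : B × B × B) : divg d1 d2 d3 (c • X) = c • divg d1 d2 d3 X := by
  simp only [divg, Prod.smul_fst, Prod.smul_snd, h1.map_smul, h2.map_smul, h3.map_smul,
    smul_add]

theorem divg_curl (c12 : ∀ x, d1 (d2 x) = d2 (d1 x)) (c13 : ∀ x, d1 (d3 x) = d3 (d1 x))
    (c23 : ∀ x, d2 (d3 x) = d3 (d2 x)) (X : B × B × B) :
    divg d1 d2 d3 (curl d1 d2 d3 X) = 0 := by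
  simp only [divg, curl, h1.map_sub, h2.map_sub, h3.map_sub, c12, c13, c23]
  abel

theorem divg_cross (X Y : B × B × B) :
    divg d1 d2 d3 (cross X Y) = dot (curl d1 d2 d3 X) Y - dot X (curl d1 d2 d3 Y) := by
  simp only [divg, cross, curl, dot, h1.map_sub, h2.map_sub, h3.map_sub,
    h1.leibniz, h2.leibniz, h3.leibniz, mul_sub, sub_mul]
  abel

end VectorCalculus

end

theorem nc_gauss_law_magnetism_general {B : Type*} [Ring B] [Algebra ℂ B]
    (d0 d1 d2 d3 : B → B)
    (h1 : IsDer d1) (h2 : IsDer d2) (h3 : IsDer d3)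
    (hcomm : ∀ δ ∈ [d0, d1, d2, d3], ∀ δ' ∈ [d0, d1, d2, d3], ∀ x : B,
      δ (δ' x) = δ' (δ x))
    (A : B × B × B) :
    divg d1 d2 d3 (Hfield d1 d2 d3 A) =
      Complex.I • commV (Bfield d1 d2 d3 A) A := by
  have hcurl : divg d1 d2 d3 (curl d1 d2 d3 A) = 0 :=
    divg_curl h1 h2 h3 (hcomm d1 (by simp) d2 (by simp)) (hcomm d1 (by simp) d3 (by simp))
      (hcomm d2 (by simp) d3 (by simp)) A
  rw [Hfield, Bfield, divg_add h1 h2 h3, divg_smul h1 h2 h3, hcurl, divg_cross h1 h2 h3,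
    commV_eq_dot_sub_dot, zero_add]

/-- **Noncommutative Gauss law for magnetism**: for every gauge potential `(φ,A)`
on the trivial quantum principal `U(1)`-bundle over a noncommutative space-time
with four pairwise commuting ℂ-linear derivations, `∇·H = i[Bf,A]`. -/
theorem nc_gauss_law_magnetism {B : Type*} [Ring B] [Algebra ℂ B]
    (d0 d1 d2 d3 : B → B)
    (h0 : IsDer d0) (h1 : IsDer d1) (h2 : IsDer d2) (h3 : IsDer d3)
    (hcomm : ∀ δ ∈ [d0, d1, d2, d3], ∀ δ' ∈ [d0, d1, d2, d3], ∀ x : B,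
      δ (δ' x) = δ' (δ x))
    (φ : B) (A : B × B × B) :
    divg d1 d2 d3 (Hfield d1 d2 d3 A) =
      Complex.I • commV (Bfield d1 d2 d3 A) A :=
  nc_gauss_law_magnetism_general d0 d1 d2 d3 h1 h2 h3 hcomm A

end NC
end
end

section
/- (Explicit solution with electric charge and magnetic current.) Let θ ∈ ℝ, and let B be a unital associative ℂ-*-algebra containing self-adjoint elements x⁰, x¹, x² with x⁰x¹ − x¹x⁰ = i·1, x⁰x² − x²x⁰ = iθ·1 and x¹x² = x²x¹, equipped with four pairwise commuting ℂ-linear derivations ∂₀,…,∂₃ such that ∂_μ(x^ν) = δ_{μν}·1 for μ,ν ∈ {0,1,2} and ∂₃(x^ν) = 0. Take the gauge potential φ := x¹x², A := (x⁰, 0, 0). Then E = (−1 − x², −x¹, 0), Bf = (0,0,0), D = (−1 + θx¹, −x¹, 0), H = (0,0,0), and the noncommutative Maxwell equations hold with ∇·H = 0 = i[Bf,A], ∇×D + ∂₀H = (0,0,−1) = i[φ,Bf] − i(E×A + A×E), ∇·D = θ·1 = i[D,A*], and ∇×H − ∂₀D = (0,0,0) = i[D,φ*] − i(H×A* + A*×H);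 i.e., the electric charge density is the real constant θ and the magnetic current density is the constant vector (0,0,1). -/
noncomputable section

namespace NC

/-- componentwise star of a triple. -/
def starV {B : Type*} [Ring B] [StarRing B] (X : B × B × B) : B × B × B :=
  (star X.1, star X.2.1, star X.2.2)

theorem IsDer.dzero {B : Type*} [Ring B] [Algebra ℂ B] {δ : B → B} (h : IsDer δ) :
    δ (0 : B) = 0 := by
  have := h.map_smul 0 0; simpa using this

theorem IsDer.done {B : Type*} [Ring B] [Algebra ℂ B] {δ : B → B} (h : IsDer δ) :
    δ (1 : B) = 0 := by
  have := h.leibniz 1 1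
  simp only [mul_one, one_mul] at this
  exact (left_eq_add.mp this)

theorem IsDer.dneg {B : Type*} [Ring B] [Algebra ℂ B] {δ : B → B} (h : IsDer δ) (a : B) :
    δ (-a) = -δ a := by
  have := h.map_smul (-1) a
  simpa [neg_one_smul] using this

theorem IsDer.dsub {B : Type*} [Ring B] [Algebra ℂ B] {δ : B → B} (h : IsDer δ) (a b : B) :
    δ (a - b) = δ a - δ b := by
  rw [sub_eq_add_neg, h.map_add, h.dneg, ← sub_eq_add_neg]

/-- **Explicit solution with electric charge and magnetic current** on the
Moyal–Weyl-type algebra with `x⁰x¹ - x¹x⁰ = i·1`, `x⁰x² - x²x⁰ = iθ·1`,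
`x¹x² = x²x¹`: for the gauge potential `φ = x¹x²`, `A = (x⁰,0,0)` one gets
`E = (-1-x², -x¹, 0)`, `Bf = 0`, `D = (-1+θx¹, -x¹, 0)`, `H = 0`, and the
noncommutative Maxwell equations hold with electric charge density `θ·1` and
magnetic current density `(0,0,1)`. -/
theorem nc_electric_charge_magnetic_current_solution
    {B : Type*} [Ring B] [Algebra ℂ B] [StarRing B]
    (θ : ℝ) (x0 x1 x2 : B)
    (hs0 : star x0 = x0) (hs1 : star x1 = x1) (hs2 : star x2 = x2)
    (hc01 : x0 * x1 - x1 * x0 = Complex.I • (1 : B))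
    (hc02 : x0 * x2 - x2 * x0 = ((θ : ℂ) * Complex.I) • (1 : B))
    (hc12 : x1 * x2 = x2 * x1)
    (d0 d1 d2 d3 : B → B)
    (hd0 : IsDer d0) (hd1 : IsDer d1) (hd2 : IsDer d2) (hd3 : IsDer d3)
    (hcomm : ∀ δ ∈ [d0, d1, d2, d3], ∀ δ' ∈ [d0, d1, d2, d3], ∀ x : B,
      δ (δ' x) = δ' (δ x))
    (h00 : d0 x0 = 1) (h01 : d0 x1 = 0) (h02 : d0 x2 = 0)
    (h10 : d1 x0 = 0) (h11 : d1 x1 = 1) (h12 : d1 x2 = 0)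
    (h20 : d2 x0 = 0) (h21 : d2 x1 = 0) (h22 : d2 x2 = 1)
    (h30 : d3 x0 = 0) (h31 : d3 x1 = 0) (h32 : d3 x2 = 0) :
    Efield d0 d1 d2 d3 (x1 * x2) (x0, 0, 0) = (-1 - x2, -x1, 0) ∧
    Bfield d1 d2 d3 ((x0 : B), 0, 0) = 0 ∧
    Dfield d0 d1 d2 d3 (x1 * x2) (x0, 0, 0) = (-1 + (θ : ℂ) • x1, -x1, 0) ∧
    Hfield d1 d2 d3 ((x0 : B), 0, 0) = 0 ∧
    divg d1 d2 d3 (Hfield d1 d2 d3 ((x0 : B), 0, 0)) = 0 ∧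
    divg d1 d2 d3 (Hfield d1 d2 d3 ((x0 : B), 0, 0)) =
      Complex.I • commV (Bfield d1 d2 d3 ((x0 : B), 0, 0)) ((x0 : B), 0, 0) ∧
    curl d1 d2 d3 (Dfield d0 d1 d2 d3 (x1 * x2) (x0, 0, 0)) +
      dmap d0 (Hfield d1 d2 d3 ((x0 : B), 0, 0)) = (0, 0, -1) ∧
    curl d1 d2 d3 (Dfield d0 d1 d2 d3 (x1 * x2) (x0, 0, 0)) +
      dmap d0 (Hfield d1 d2 d3 ((x0 : B), 0, 0)) =
      Complex.I • commS (x1 * x2) (Bfield d1 d2 d3 ((x0 : B), 0, 0)) -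
        Complex.I • (cross (Efield d0 d1 d2 d3 (x1 * x2) (x0, 0, 0)) ((x0 : B), 0, 0) +
          cross ((x0 : B), 0, 0) (Efield d0 d1 d2 d3 (x1 * x2) (x0, 0, 0))) ∧
    divg d1 d2 d3 (Dfield d0 d1 d2 d3 (x1 * x2) (x0, 0, 0)) = (θ : ℂ) • (1 : B) ∧
    divg d1 d2 d3 (Dfield d0 d1 d2 d3 (x1 * x2) (x0, 0, 0)) =
      Complex.I • commV (Dfield d0 d1 d2 d3 (x1 * x2) (x0, 0, 0))
        (starV ((x0 : B), 0, 0)) ∧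
    curl d1 d2 d3 (Hfield d1 d2 d3 ((x0 : B), 0, 0)) -
      dmap d0 (Dfield d0 d1 d2 d3 (x1 * x2) (x0, 0, 0)) = 0 ∧
    curl d1 d2 d3 (Hfield d1 d2 d3 ((x0 : B), 0, 0)) -
      dmap d0 (Dfield d0 d1 d2 d3 (x1 * x2) (x0, 0, 0)) =
      Complex.I • commR (Dfield d0 d1 d2 d3 (x1 * x2) (x0, 0, 0)) (star (x1 * x2)) -
        Complex.I • (cross (Hfield d1 d2 d3 ((x0 : B), 0, 0)) (starV ((x0 : B), 0, 0)) +
          cross (starV ((x0 : B), 0, 0)) (Hfield d1 d2 d3 ((x0 : B), 0, 0))) := by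
  clear hcomm
  -- commutation of x0 past x1*x2
  have e1 : x0 * x1 = Complex.I • (1 : B) + x1 * x0 := sub_eq_iff_eq_add.mp hc01
  have e2 : x0 * x2 = ((θ : ℂ) * Complex.I) • (1 : B) + x2 * x0 := sub_eq_iff_eq_add.mp hc02
  have key : x0 * (x1 * x2) =
      x1 * x2 * x0 + ((θ : ℂ) * Complex.I) • x1 + Complex.I • x2 := by
    calc x0 * (x1 * x2) = (x0 * x1) * x2 := (mul_assoc _ _ _).symm
      _ = Complex.I • x2 + x1 * (x0 * x2) := by
          rw [e1, add_mul, smul_mul_assoc, one_mul, mul_assoc]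
      _ = Complex.I • x2 + x1 * (((θ : ℂ) * Complex.I) • (1 : B) + x2 * x0) := by rw [e2]
      _ = x1 * x2 * x0 + ((θ : ℂ) * Complex.I) • x1 + Complex.I • x2 := by
          rw [mul_add, mul_smul_comm, mul_one, ← mul_assoc]; abel
  have hcφ : x1 * x2 * x0 - x0 * (x1 * x2) =
      (-((θ : ℂ) * Complex.I)) • x1 + (-Complex.I) • x2 := by
    rw [key]; module
  have h10 : x1 * x0 - x0 * x1 = (-Complex.I) • (1 : B) := by
    rw [neg_smul, ← hc01]; abel
  -- scalar simplifications
  have s1 : Complex.I • ((-((θ : ℂ) * Complex.I)) • x1 + (-Complex.I) • x2) =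
      (θ : ℂ) • x1 + (1 : ℂ) • x2 := by
    rw [smul_add, smul_smul, smul_smul]
    congr 2 <;> [skip; skip] <;>
      · ring_nf
        simp [Complex.I_sq]
  -- derivatives of φ = x1 * x2
  have k0 : d0 (x1 * x2) = 0 := by rw [hd0.leibniz, h01, h02]; simp
  have k1 : d1 (x1 * x2) = x2 := by rw [hd1.leibniz, h11, h12]; simp
  have k2 : d2 (x1 * x2) = x1 := by rw [hd2.leibniz, h21, h22]; simp
  have k3 : d3 (x1 * x2) = 0 := by rw [hd3.leibniz, h31, h32]; simp
  -- the four fields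
  have hE : Efield d0 d1 d2 d3 (x1 * x2) ((x0 : B), 0, 0) = (-1 - x2, -x1, 0) := by
    simp only [Efield, dmap, grad, k1, k2, k3, h00, hd0.dzero, Prod.neg_mk, Prod.mk_sub_mk,
      neg_zero, zero_sub, sub_zero, Prod.mk.injEq]
  have hB : Bfield d1 d2 d3 ((x0 : B), 0, 0) = 0 := by
    simp [Bfield, curl, h10, h20, h30, hd1.dzero, hd2.dzero, hd3.dzero, Prod.mk_eq_zero]
  have hH : Hfield d1 d2 d3 ((x0 : B), 0, 0) = 0 := by
    rw [Hfield, hB]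
    simp [cross, Prod.ext_iff]
  have hcomms : commS (x1 * x2) ((x0 : B), 0, 0) =
      ((-((θ : ℂ) * Complex.I)) • x1 + (-Complex.I) • x2, 0, 0) := by
    simp [commS, hcφ]
  have hD : Dfield d0 d1 d2 d3 (x1 * x2) ((x0 : B), 0, 0) =
      (-1 + (θ : ℂ) • x1, -x1, 0) := by
    rw [Dfield, hE, hcomms]
    rw [Prod.ext_iff, Prod.ext_iff]
    refine ⟨?_, ?_, ?_⟩
    · show -1 - x2 + Complex.I • ((-((θ : ℂ) * Complex.I)) • x1 + (-Complex.I) • x2) =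
        -1 + (θ : ℂ) • x1
      rw [s1, one_smul]; abel
    · show -x1 + Complex.I • (0 : B) = -x1
      simp
    · show (0 : B) + Complex.I • (0 : B) = 0
      simp
  refine ⟨hE, hB, hD, hH, ?_, ?_, ?_, ?_, ?_, ?_, ?_, ?_⟩
  · rw [hH]
    simp [divg, hd1.dzero, hd2.dzero, hd3.dzero, Prod.fst_zero, Prod.snd_zero]
  · rw [hH, hB]
    simp [divg, commV, hd1.dzero, hd2.dzero, hd3.dzero, Prod.fst_zero, Prod.snd_zero]
  · rw [hD, hH]
    simp only [curl, dmap, Prod.fst_zero, Prod.snd_zero, hd0.dzero, Prod.mk_add_mk, add_zero,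
      hd1.dneg, hd2.dneg, hd3.dneg, hd1.map_add, hd2.map_add, hd3.map_add,
      hd1.dzero, hd2.dzero, hd3.dzero, hd1.done, hd2.done, hd3.done,
      hd1.map_smul, hd2.map_smul, hd3.map_smul, h11, h21, h31, Prod.mk.injEq]
    refine ⟨by simp, by simp, by simp⟩
  · rw [hD, hH, hB, hE]
    simp only [curl, dmap, cross, commS, Prod.fst_zero, Prod.snd_zero, hd0.dzero,
      Prod.mk_add_mk, add_zero, hd1.dneg, hd2.dneg, hd3.dneg,
      hd1.map_add, hd2.map_add, hd3.map_add, hd1.dzero, hd2.dzero, hd3.dzero,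
      hd1.done, hd2.done, hd3.done, hd1.map_smul, hd2.map_smul, hd3.map_smul,
      h11, h21, h31, mul_zero, zero_mul, sub_zero, sub_self, zero_sub, smul_zero,
      Prod.smul_mk, Prod.mk_sub_mk, neg_zero, Prod.mk.injEq, neg_mul]
    refine ⟨by simp, by simp, ?_⟩
    have h10' : - -(x1 * x0) + x0 * -x1 = (-Complex.I) • (1 : B) := by
      rw [← h10, mul_neg]; abel
    rw [h10', smul_smul, mul_neg, Complex.I_mul_I, neg_neg, one_smul]
  · rw [hD]
    simp only [divg, hd1.map_add, hd1.dneg, hd1.done, hd1.map_smul, h11,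
      hd2.dneg, h21, hd3.dzero, neg_zero, zero_add]
    abel
  · rw [hD]
    simp only [divg, starV, commV, hd1.map_add, hd1.dneg, hd1.done, hd1.map_smul, h11,
      hd2.dneg, h21, hd3.dzero, hs0, star_zero, mul_zero, zero_mul, sub_self, add_zero,
      neg_zero, zero_add, sub_zero]
    have key2 : (-1 + (θ : ℂ) • x1) * x0 - x0 * (-1 + (θ : ℂ) • x1) =
        (θ : ℂ) • (x1 * x0 - x0 * x1) := by
      rw [add_mul, mul_add, neg_one_mul, mul_neg_one, smul_mul_assoc, mul_smul_comm, smul_sub]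
      abel
    rw [key2, h10, smul_smul, smul_smul]
    have key3 : Complex.I * (θ : ℂ) * -Complex.I = (θ : ℂ) := by
      rw [mul_comm Complex.I ((θ : ℂ)), mul_assoc, mul_neg, Complex.I_mul_I, neg_neg, mul_one]
    rw [key3]
  · rw [hH, hD]
    have dd : d0 ((θ : ℂ) • x1) = 0 := by rw [hd0.map_smul, h01, smul_zero]
    rw [Prod.ext_iff, Prod.ext_iff]
    refine ⟨?_, ?_, ?_⟩ <;>
      simp only [curl, dmap, hd0.map_add, hd0.dneg, hd0.done, dd, hd0.dzero,
        hd1.dzero, hd2.dzero, hd3.dzero, Prod.fst_zero, Prod.snd_zero] <;>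
      simp [h01]
  · rw [hH, hD]
    have dd : d0 ((θ : ℂ) • x1) = 0 := by rw [hd0.map_smul, h01, smul_zero]
    have hstar : star (x1 * x2) = x1 * x2 := by
      rw [star_mul, hs1, hs2, hc12]
    have c1 : x1 * (x1 * x2) = (x1 * x2) * x1 := by
      rw [hc12, ← mul_assoc, hc12]
    have t1 : (-1 + (θ : ℂ) • x1) * (x1 * x2) - x1 * x2 * (-1 + (θ : ℂ) • x1) = 0 := by
      rw [add_mul, mul_add, neg_one_mul, mul_neg_one, smul_mul_assoc, mul_smul_comm, c1]
      abel
    have t2 : -x1 * (x1 * x2) - x1 * x2 * -x1 = 0 := by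
      rw [neg_mul, mul_neg, c1]; abel
    have hcr : commR ((-1 + (θ : ℂ) • x1 : B), -x1, (0 : B)) (x1 * x2) =
        ((0 : B), (0 : B), (0 : B)) := by
      rw [Prod.ext_iff, Prod.ext_iff]
      exact ⟨t1, t2, by simp [commR]⟩
    rw [hstar, hcr]
    rw [Prod.ext_iff, Prod.ext_iff]
    refine ⟨?_, ?_, ?_⟩ <;>
      simp only [curl, dmap, cross, starV, hs0, star_zero, Prod.fst_zero, Prod.snd_zero,
        hd0.map_add, hd0.dneg, hd0.done, dd, hd0.dzero,
        hd1.dzero, hd2.dzero, hd3.dzero] <;>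
      simp [h01]

end NC
end
end

section
/- Let q be a real number with q ∉ {0, 1, −1}. In the Laurent polynomial algebra H = ℂ[z,z⁻¹] with counit ε := (evaluation at 1), antipode S determined by S(zⁿ) = z⁻ⁿ, and star operation (Σ aₘ zᵐ)* := Σ conj(aₘ) z⁻ᵐ, let ev_{q²} and ev_{q⁻²} be the evaluation homomorphisms at q² and q⁻², and set R := ker ε ∩ ker ev_{q²} ∩ ker ev_{q⁻²}. Then: (1) R is an ideal of H contained in ker ε; (2) (S(R))* ⊆ R; (3) the quotient ℂ-vector space ker ε / R has dimension 2, and the classes of z − 1 and z⁻¹ − 1 form a basis of it. -/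
noncomputable section

namespace U1FODC

/-- Evaluation at `t ∈ ℂ` of a Laurent polynomial, `ev_t(Σ aₘ zᵐ) = Σ aₘ tᵐ`,
as a ℂ-linear map. -/
def evL (t : ℂ) : LaurentPolynomial ℂ →ₗ[ℂ] ℂ :=
  Finsupp.lsum ℂ (fun n : ℤ => t ^ n • (LinearMap.id : ℂ →ₗ[ℂ] ℂ)) ∘ₗ
    (AddMonoidAlgebra.coeffLinearEquiv ℂ).toLinearMap

theorem evL_T (t : ℂ) (n : ℤ) : evL t (LaurentPolynomial.T n) = t ^ n := by
  rw [LaurentPolynomial.T, evL]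
  simp only [LinearMap.comp_apply, LinearEquiv.coe_coe,
    AddMonoidAlgebra.coeffLinearEquiv_apply, AddMonoidAlgebra.coeff_single]
  erw [Finsupp.lsum_single]
  simp

theorem evL_one (t : ℂ) : evL t 1 = 1 := by
  rw [← LaurentPolynomial.T_zero, evL_T, zpow_zero]

/-- The antipode `S(Σ aₘ zᵐ) = Σ aₘ z⁻ᵐ`. -/
def antipode (f : LaurentPolynomial ℂ) : LaurentPolynomial ℂ :=
  AddMonoidAlgebra.ofCoeff (Finsupp.mapDomain (fun n => -n) f.coeff)

/-- The star operation `(Σ aₘ zᵐ)* = Σ conj(aₘ) z⁻ᵐ`. -/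
def starH (f : LaurentPolynomial ℂ) : LaurentPolynomial ℂ :=
  AddMonoidAlgebra.ofCoeff
    (Finsupp.mapDomain (fun n => -n) (Finsupp.mapRange (starRingEnd ℂ) (map_zero _) f.coeff))

/-- `ker ε`, where the counit `ε` is evaluation at `1`, as a ℂ-subspace. -/
def Keps : Submodule ℂ (LaurentPolynomial ℂ) := LinearMap.ker (evL 1)

/-- `R := ker ε ∩ ker ev_{q²} ∩ ker ev_{q⁻²}`, as a ℂ-subspace. -/
def Rsub (q : ℝ) : Submodule ℂ (LaurentPolynomial ℂ) :=
  LinearMap.ker (evL 1) ⊓ LinearMap.ker (evL ((q : ℂ) ^ 2)) ⊓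
    LinearMap.ker (evL ((q : ℂ) ^ (-2 : ℤ)))

/-- `R` viewed as a subspace of `ker ε`. -/
def Rin (q : ℝ) : Submodule ℂ Keps := (Rsub q).comap Keps.subtype

/-- The quantum (dual) Lie algebra `invΓ = ker ε / R`. -/
abbrev invGamma (q : ℝ) := Keps ⧸ Rin q

/-- `z - 1` as an element of `ker ε`. -/
def zm1 : Keps :=
  ⟨LaurentPolynomial.T 1 - 1, by
    rw [Keps, LinearMap.mem_ker, map_sub, evL_T, evL_one, one_zpow, sub_self]⟩

/-- `z⁻¹ - 1` as an element of `ker ε`. -/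
def zim1 : Keps :=
  ⟨LaurentPolynomial.T (-1) - 1, by
    rw [Keps, LinearMap.mem_ker, map_sub, evL_T, evL_one, one_zpow, sub_self]⟩

/-! For `t ≠ 0`, `ev_t` is the ring homomorphism `z ↦ t`, so `R` is an intersection of kernels of
ring homomorphisms, hence an ideal. At a real point `t`, `(S f)*` evaluates to the conjugate of
`f(t)`, so `R` is stable under `f ↦ (S f)*`. Finally, with `t = q²`, the map
`(ev_t, ev_{t⁻¹}) : ker ε → ℂ²` has kernel `R` and sends `z - 1`, `z⁻¹ - 1` to `(t - 1, t⁻¹ - 1)`,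
`(t⁻¹ - 1, t - 1)`. These are independent because
`(t - 1)² - (t⁻¹ - 1)² = (t - 1)³ (t + 1) / t² ≠ 0`, so the map is onto and `ker ε / R ≅ ℂ²`. -/

open LaurentPolynomial

theorem evL_single (t : ℂ) (n : ℤ) (a : ℂ) :
    evL t (AddMonoidAlgebra.single n a) = a * t ^ n := by
  rw [← mul_one a, ← AddMonoidAlgebra.smul_single', ← T, map_smul, evL_T, smul_eq_mul, mul_one]

theorem evL_eq_eval₂ {t : ℂ} (ht : t ≠ 0) (f : LaurentPolynomial ℂ) :
    evL t f = eval₂ (RingHom.id ℂ) (Units.mk0 t ht) f := by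
  induction f using AddMonoidAlgebra.induction_linear with
  | zero => simp
  | add f g hf hg => rw [map_add, map_add, hf, hg]
  | single n a => rw [evL_single, single_eq_C_mul_T, eval₂_C_mul_T]; simp

theorem coe_ker_evL {t : ℂ} (ht : t ≠ 0) :
    (LinearMap.ker (evL t) : Set (LaurentPolynomial ℂ)) =
      RingHom.ker (eval₂ (RingHom.id ℂ) (Units.mk0 t ht)) := by
  ext f
  simp [evL_eq_eval₂ ht]

theorem antipode_add (f g : LaurentPolynomial ℂ) :
    antipode (f + g) = antipode f + antipode g := by
  simp only [antipode, AddMonoidAlgebra.coeff_add, Finsupp.mapDomain_add,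
    AddMonoidAlgebra.ofCoeff_add]

theorem starH_add (f g : LaurentPolynomial ℂ) :
    starH (f + g) = starH f + starH g := by
  simp only [starH, AddMonoidAlgebra.coeff_add, Finsupp.mapRange_add (map_add _),
    Finsupp.mapDomain_add, AddMonoidAlgebra.ofCoeff_add]

theorem antipode_single (n : ℤ) (a : ℂ) :
    antipode (AddMonoidAlgebra.single n a) = AddMonoidAlgebra.single (-n) a := by
  simp only [antipode, AddMonoidAlgebra.coeff_single, Finsupp.mapDomain_single,
    AddMonoidAlgebra.ofCoeff_single]

theorem starH_single (n : ℤ) (a : ℂ) :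
    starH (AddMonoidAlgebra.single n a) = AddMonoidAlgebra.single (-n) (starRingEnd ℂ a) := by
  simp only [starH, AddMonoidAlgebra.coeff_single, Finsupp.mapRange_single,
    Finsupp.mapDomain_single, AddMonoidAlgebra.ofCoeff_single]

theorem evL_antipode (t : ℂ) (f : LaurentPolynomial ℂ) : evL t (antipode f) = evL t⁻¹ f := by
  induction f using AddMonoidAlgebra.induction_linear with
  | zero => simp [antipode]
  | add f g hf hg => rw [antipode_add, map_add, map_add, hf, hg]
  | single n a => rw [antipode_single, evL_single, evL_single, zpow_neg, inv_zpow]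

theorem evL_starH (t : ℂ) (f : LaurentPolynomial ℂ) :
    evL t (starH f) = starRingEnd ℂ (evL (starRingEnd ℂ t)⁻¹ f) := by
  induction f using AddMonoidAlgebra.induction_linear with
  | zero => simp [starH]
  | add f g hf hg => rw [starH_add, map_add, map_add, hf, hg, map_add]
  | single n a =>
    rw [starH_single, evL_single, evL_single, map_mul, map_zpow₀, map_inv₀, Complex.conj_conj,
      zpow_neg, inv_zpow]

theorem evL_starH_antipode (t : ℂ) (f : LaurentPolynomial ℂ) :
    evL t (starH (antipode f)) = starRingEnd ℂ (evL (starRingEnd ℂ t) f) := by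
  rw [evL_starH, evL_antipode, inv_inv]

theorem sub_one_sq_ne_inv_sub_one_sq {K : Type*} [Field K] {t : K} (h0 : t ≠ 0) (h1 : t ≠ 1)
    (hm1 : t ≠ -1) :
    (t - 1) ^ 2 ≠ (t⁻¹ - 1) ^ 2 := by
  intro h
  have : (t - 1) ^ 3 * (t + 1) = 0 := by
    field_simp at h
    linear_combination h
  rcases mul_eq_zero.1 this with h | h
  · exact h1 (sub_eq_zero.1 (pow_eq_zero_iff three_ne_zero |>.1 h))
  · exact hm1 (eq_neg_of_add_eq_zero_left h)

theorem linearIndependent_pair_swap {K : Type*} [Field K] {a b : K} (h : a ^ 2 ≠ b ^ 2) :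
    LinearIndependent K ![(a, b), (b, a)] := by
  rw [LinearIndependent.pair_iff]
  intro s t hst
  simp only [Prod.smul_mk, smul_eq_mul, Prod.mk_add_mk, Prod.mk_eq_zero] at hst
  have hab : a ^ 2 - b ^ 2 ≠ 0 := sub_ne_zero.2 h
  refine ⟨?_, ?_⟩
  · have : s * (a ^ 2 - b ^ 2) = 0 := by linear_combination a * hst.1 - b * hst.2
    exact (mul_eq_zero.1 this).resolve_right hab
  · have : t * (a ^ 2 - b ^ 2) = 0 := by linear_combination a * hst.2 - b * hst.1
    exact (mul_eq_zero.1 this).resolve_right hab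

theorem exists_basis_quotient_mk_of_linearIndependent {K V W ι : Type*} [Field K]
    [AddCommGroup V] [Module K V] [AddCommGroup W] [Module K W] [FiniteDimensional K W] [Fintype ι]
    (Φ : V →ₗ[K] W) {p : Submodule K V} (hker : LinearMap.ker Φ = p) (x : ι → V)
    (hli : LinearIndependent K (Φ ∘ x)) (hcard : Fintype.card ι = Module.finrank K W) :
    ∃ b : Module.Basis ι K (V ⧸ p), ∀ i, b i = Submodule.Quotient.mk (x i) := by
  let v := basisOfLinearIndependentOfCardEqFinrank' _ hli hcard
  have hsurj : Function.Surjective Φ := by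
    rw [← LinearMap.range_eq_top, eq_top_iff, ← v.span_eq, Submodule.span_le]
    rintro _ ⟨i, rfl⟩
    exact ⟨x i, by simp [v]⟩
  let e := (Submodule.quotEquivOfEq _ _ hker.symm).trans (Φ.quotKerEquivOfSurjective hsurj)
  refine ⟨v.map e.symm, fun i => ?_⟩
  rw [Module.Basis.map_apply, LinearEquiv.symm_apply_eq]
  simp [e, v]

theorem exists_ideal_coe_eq_Rsub {q : ℝ} (hq : q ≠ 0) :
    ∃ I : Ideal (LaurentPolynomial ℂ),
      (I : Set (LaurentPolynomial ℂ)) = (Rsub q : Set (LaurentPolynomial ℂ)) := by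
  have hq' : (q : ℂ) ≠ 0 := Complex.ofReal_ne_zero.2 hq
  refine ⟨RingHom.ker (eval₂ (RingHom.id ℂ) (Units.mk0 1 one_ne_zero)) ⊓
    RingHom.ker (eval₂ (RingHom.id ℂ) (Units.mk0 _ (pow_ne_zero 2 hq'))) ⊓
    RingHom.ker (eval₂ (RingHom.id ℂ) (Units.mk0 _ (zpow_ne_zero (-2) hq'))), ?_⟩
  simp only [Rsub, Submodule.coe_inf, coe_ker_evL one_ne_zero, coe_ker_evL (pow_ne_zero 2 hq'),
    coe_ker_evL (zpow_ne_zero (-2) hq')]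

theorem starH_antipode_mem_Rsub {q : ℝ} {f : LaurentPolynomial ℂ} (hf : f ∈ Rsub q) :
    starH (antipode f) ∈ Rsub q := by
  have hreal : ∀ t : ℂ, starRingEnd ℂ t = t → evL t f = 0 → evL t (starH (antipode f)) = 0 :=
    fun t ht hft => by rw [evL_starH_antipode, ht, hft, map_zero]
  obtain ⟨⟨h1, h2⟩, h3⟩ := hf
  exact ⟨⟨hreal 1 (map_one _) h1, hreal _ (by simp [Complex.conj_ofReal]) h2⟩,
    hreal _ (by simp [Complex.conj_ofReal]) h3⟩

def evPair (q : ℝ) : Keps →ₗ[ℂ] ℂ × ℂ :=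
  ((evL ((q : ℂ) ^ 2)).comp Keps.subtype).prod ((evL ((q : ℂ) ^ (-2 : ℤ))).comp Keps.subtype)

theorem ker_evPair (q : ℝ) : LinearMap.ker (evPair q) = Rin q := by
  ext x
  have hx : evL 1 x = 0 := x.2
  simp [evPair, Rin, Rsub, hx]

theorem evPair_zm1 (q : ℝ) : evPair q zm1 = ((q : ℂ) ^ 2 - 1, ((q : ℂ) ^ 2)⁻¹ - 1) := by
  simp [evPair, zm1, evL_T, evL_one]

theorem evPair_zim1 (q : ℝ) : evPair q zim1 = (((q : ℂ) ^ 2)⁻¹ - 1, (q : ℂ) ^ 2 - 1) := by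
  simp [evPair, zim1, evL_T, evL_one]

/-- For real `q ∉ {0,1,-1}`: (1) `R = ker ε ∩ ker ev_{q²} ∩ ker ev_{q⁻²}` is an
ideal of `H = ℂ[z,z⁻¹]` contained in `ker ε`; (2) `(S(R))* ⊆ R`; (3) the quotient
`ker ε / R` is 2-dimensional over ℂ, and the classes of `z - 1` and `z⁻¹ - 1`
form a basis of it. -/
theorem fodc_ideal_and_two_dimensional_quantum_lie_algebra
    (q : ℝ) (hq0 : q ≠ 0) (hq1 : q ≠ 1) (hqm1 : q ≠ -1) :
    (∃ I : Ideal (LaurentPolynomial ℂ),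
      (I : Set (LaurentPolynomial ℂ)) = (Rsub q : Set (LaurentPolynomial ℂ))) ∧
    (Rsub q : Set (LaurentPolynomial ℂ)) ⊆ (Keps : Set (LaurentPolynomial ℂ)) ∧
    (∀ f ∈ Rsub q, starH (antipode f) ∈ Rsub q) ∧
    Module.finrank ℂ (invGamma q) = 2 ∧
    ∃ b : Module.Basis (Fin 2) ℂ (invGamma q),
      b 0 = Submodule.Quotient.mk (p := Rin q) zm1 ∧
      b 1 = Submodule.Quotient.mk (p := Rin q) zim1 := by
  have ht0 : (q : ℂ) ^ 2 ≠ 0 := pow_ne_zero 2 (Complex.ofReal_ne_zero.2 hq0)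
  have ht1 : (q : ℂ) ^ 2 ≠ 1 := by exact_mod_cast (sq_eq_one_iff.not.2 (by tauto) : q ^ 2 ≠ 1)
  have htm1 : (q : ℂ) ^ 2 ≠ -1 := by
    exact_mod_cast (by nlinarith [sq_nonneg q] : q ^ 2 ≠ -1)
  have himage : evPair q ∘ ![zm1, zim1] =
      ![((q : ℂ) ^ 2 - 1, ((q : ℂ) ^ 2)⁻¹ - 1), (((q : ℂ) ^ 2)⁻¹ - 1, (q : ℂ) ^ 2 - 1)] := by
    ext i : 1
    fin_cases i <;> simp [evPair_zm1, evPair_zim1]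
  have hli : LinearIndependent ℂ (evPair q ∘ ![zm1, zim1]) :=
    himage ▸ linearIndependent_pair_swap (sub_one_sq_ne_inv_sub_one_sq ht0 ht1 htm1)
  obtain ⟨b, hb⟩ :=
    exists_basis_quotient_mk_of_linearIndependent (evPair q) (ker_evPair q) _ hli (by simp)
  refine ⟨exists_ideal_coe_eq_Rsub hq0, fun f hf => hf.1.1, fun f => starH_antipode_mem_Rsub,
    ?_, b, hb 0, hb 1⟩
  rw [Module.finrank_eq_card_basis b, Fintype.card_fin]

end U1FODC
end
end

section
/- (Two-field noncommutative Bianchi identity.) Let Ω be an associative ℂ-algebra, d : Ω → Ω a ℂ-linear map, and A^e, A^m ∈ Ω elements with d(dA^e) = d(dA^m) = 0 and d(XY) = d(X)·Y − X·d(Y) for all X, Y ∈ {A^e, A^m}. Set Q := A^eA^m + A^mA^e, F^e := dA^e − iQ and F^m := dA^m − iQ. Then dF^e = dF^m = i(A^eF^m − F^mA^e) + i(A^mF^e − F^eA^m) + (A^m(A^e)² − (A^e)²A^m) + (A^e(A^m)² − (A^m)²A^e). -/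
/-!
Since `d ∘ d` kills `A^e` and `A^m`, both field strengths have the same differential `-i dQ`.
On the right-hand side, `i² = -1` turns the `Q`-parts of the commutators into
`[A^e, Q] + [A^m, Q] = [(A^e)², A^m] + [(A^m)², A^e]`, which cancels the cubic terms; what is left
is `i` times the commutators of each potential with the differential of the other, and the graded
Leibniz rule identifies these with `-i dQ`.
-/

section Commutators

variable {R : Type*} [Ring R]

theorem commutator_anticomm_left (a b : R) :
    a * (a * b + b * a) - (a * b + b * a) * a = a * a * b - b * (a * a) := by
  noncomm_ring

theorem commutator_anticomm_right (a b : R) :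
    b * (a * b + b * a) - (a * b + b * a) * b = b * b * a - a * (b * b) := by
  rw [add_comm (a * b)]
  exact commutator_anticomm_left b a

theorem map_anticomm_of_leibniz {F : Type*} [FunLike F R R] [AddHomClass F R R] (d : F)
    {a b : R} (hab : d (a * b) = d a * b - a * d b) (hba : d (b * a) = d b * a - b * d a) :
    d (a * b + b * a) = -((a * d b - d b * a) + (b * d a - d a * b)) := by
  rw [map_add, hab, hba]
  abel

variable {S : Type*} [CommRing S] [Algebra S R] {c : S}

theorem smul_commutator_sub_smul (hc : c * c = -1) (a y q : R) :
    c • (a * (y - c • q) - (y - c • q) * a) = c • (a * y - y * a) + (a * q - q * a) := by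
  simp only [mul_sub, sub_mul, mul_smul_comm, smul_mul_assoc, smul_sub, smul_smul, hc,
    neg_one_smul]
  abel

theorem smul_commutators_add_cubic (hc : c * c = -1) (a b x y : R) :
    c • (a * (y - c • (a * b + b * a)) - (y - c • (a * b + b * a)) * a) +
        c • (b * (x - c • (a * b + b * a)) - (x - c • (a * b + b * a)) * b) +
        (b * (a * a) - a * a * b) + (a * (b * b) - b * b * a) =
      c • ((a * y - y * a) + (b * x - x * b)) := by
  rw [smul_commutator_sub_smul hc, smul_commutator_sub_smul hc, commutator_anticomm_left,
    commutator_anticomm_right, smul_add]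
  abel

end Commutators

/-- **Two-field noncommutative Bianchi identity** of the two-photon model:
with `Q := A^eA^m + A^mA^e`, `F^e := dA^e - iQ`, `F^m := dA^m - iQ`, one has
`dF^e = dF^m = i(A^eF^m - F^mA^e) + i(A^mF^e - F^eA^m)
  + (A^m(A^e)² - (A^e)²A^m) + (A^e(A^m)² - (A^m)²A^e)`. -/
theorem nc_two_field_bianchi_identity {Ω : Type*} [Ring Ω] [Algebra ℂ Ω]
    (d : Ω →ₗ[ℂ] Ω) (Ae Am : Ω)
    (hdde : d (d Ae) = 0) (hddm : d (d Am) = 0)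
    (hLeibniz : ∀ X Y : Ω, (X = Ae ∨ X = Am) → (Y = Ae ∨ Y = Am) →
      d (X * Y) = d X * Y - X * d Y) :
    d (d Ae - Complex.I • (Ae * Am + Am * Ae)) =
      Complex.I • (Ae * (d Am - Complex.I • (Ae * Am + Am * Ae)) -
          (d Am - Complex.I • (Ae * Am + Am * Ae)) * Ae) +
      Complex.I • (Am * (d Ae - Complex.I • (Ae * Am + Am * Ae)) -
          (d Ae - Complex.I • (Ae * Am + Am * Ae)) * Am) +
      (Am * (Ae * Ae) - (Ae * Ae) * Am) + (Ae * (Am * Am) - (Am * Am) * Ae) ∧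
    d (d Am - Complex.I • (Ae * Am + Am * Ae)) =
      Complex.I • (Ae * (d Am - Complex.I • (Ae * Am + Am * Ae)) -
          (d Am - Complex.I • (Ae * Am + Am * Ae)) * Ae) +
      Complex.I • (Am * (d Ae - Complex.I • (Ae * Am + Am * Ae)) -
          (d Ae - Complex.I • (Ae * Am + Am * Ae)) * Am) +
      (Am * (Ae * Ae) - (Ae * Ae) * Am) + (Ae * (Am * Am) - (Am * Am) * Ae) := by
  have hdQ := map_anticomm_of_leibniz d (hLeibniz Ae Am (.inl rfl) (.inr rfl))
    (hLeibniz Am Ae (.inr rfl) (.inl rfl))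
  have hdF : ∀ A, d (d A) = 0 → d (d A - Complex.I • (Ae * Am + Am * Ae)) =
      Complex.I • ((Ae * d Am - d Am * Ae) + (Am * d Ae - d Ae * Am)) := by
    intro A hA
    rw [map_sub, hA, map_smul, hdQ, zero_sub, smul_neg, neg_neg]
  rw [smul_commutators_add_cubic Complex.I_mul_I]
  exact ⟨hdF Ae hdde, hdF Am hddm⟩
end

section
/- (ℤ₂ electric–magnetic duality of the two-photon model.) Let B be a unital associative ℂ-*-algebra with four pairwise commuting ℂ-linear derivations ∂₀,…,∂₃ satisfying ∂_μ(b*) = (∂_μ b)*. Consider the swap of potentials (φ^e, A^e, φ^m, A^m) ↦ (φ^m, A^m, φ^e, A^e). Denoting by a prime the fields and sources computed from the swapped potentials, one has: D^e′ = H^m, H^e′ = D^m, H^m′ = D^e, D^m′ = H^e, ρ′ = ρ, j′ = j, ρ^e′ = ρ^m, j^e′ = j^m, ρ^m′ = ρ^e, and j^m′ = j^e. Hence the full set of noncommutative Maxwell equations of the two-photon model is invariant under interchanging the electric and magnetic gauge potentials. -/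
/-!
The duality is already built into the definitions: `E^e` and `B^m` are the same expression in
their potentials, as are `B^e` and `E^m`, while `K` and `C` are symmetric in the two photons.
Swapping the potentials therefore exchanges `D^e ↔ H^m` and `H^e ↔ D^m`, which leaves the sums
`D^e + H^m` and `H^e + D^m` invariant; the sources `ρ^e, j^e` and `ρ^m, j^m` differ only in
which potential multiplies these sums, so they are exchanged, and `ρ`, `j` are invariant.
-/

noncomputable section

namespace NC

namespace TwoPhoton

variable {B : Type*} [Ring B] [Algebra ℂ B]

/-- `K := [φ^m,A^e] + [φ^e,A^m]` (componentwise commutators). -/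
def Kv (φe φm : B) (Ae Am : B × B × B) : B × B × B := commS φm Ae + commS φe Am

/-- `C := A^e×A^m + A^m×A^e`. -/
def Cv (Ae Am : B × B × B) : B × B × B := cross Ae Am + cross Am Ae

/-- `E^e := -∂₀A^e - ∇φ^e`. -/
def Ee (d0 d1 d2 d3 : B → B) (φe : B) (Ae : B × B × B) : B × B × B :=
  -dmap d0 Ae - grad d1 d2 d3 φe

/-- `B^e := ∇×A^e`. -/
def Be (d1 d2 d3 : B → B) (Ae : B × B × B) : B × B × B := curl d1 d2 d3 Ae

/-- `B^m := -∂₀A^m - ∇φ^m`. -/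
def Bm (d0 d1 d2 d3 : B → B) (φm : B) (Am : B × B × B) : B × B × B :=
  -dmap d0 Am - grad d1 d2 d3 φm

/-- `E^m := ∇×A^m`. -/
def Em (d1 d2 d3 : B → B) (Am : B × B × B) : B × B × B := curl d1 d2 d3 Am

/-- `D^e := E^e + iK`. -/
def De (d0 d1 d2 d3 : B → B) (φe : B) (Ae : B × B × B) (φm : B) (Am : B × B × B) :
    B × B × B :=
  Ee d0 d1 d2 d3 φe Ae + Complex.I • Kv φe φm Ae Am

/-- `H^e := B^e + iC`. -/
def He (d1 d2 d3 : B → B) (Ae Am : B × B × B) : B × B × B :=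
  Be d1 d2 d3 Ae + Complex.I • Cv Ae Am

/-- `H^m := B^m + iK`. -/
def Hm (d0 d1 d2 d3 : B → B) (φe : B) (Ae : B × B × B) (φm : B) (Am : B × B × B) :
    B × B × B :=
  Bm d0 d1 d2 d3 φm Am + Complex.I • Kv φe φm Ae Am

/-- `D^m := E^m + iC`. -/
def Dm (d1 d2 d3 : B → B) (Ae Am : B × B × B) : B × B × B :=
  Em d1 d2 d3 Am + Complex.I • Cv Ae Am

end TwoPhoton


namespace TwoPhoton

variable {B : Type*} [Ring B] [Algebra ℂ B] [StarRing B]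

/-- `ρ := i[B^e,A^m] + i[E^m,A^e]`. -/
def rho (d1 d2 d3 : B → B) (Ae Am : B × B × B) : B :=
  Complex.I • commV (Be d1 d2 d3 Ae) Am + Complex.I • commV (Em d1 d2 d3 Am) Ae

/-- `-j := i[φ^m,B^e] + i[φ^e,E^m] - i(E^e×A^m + A^m×E^e + B^m×A^e + A^e×B^m)`. -/
def negj (d0 d1 d2 d3 : B → B) (φe : B) (Ae : B × B × B) (φm : B) (Am : B × B × B) :
    B × B × B :=
  Complex.I • commS φm (Be d1 d2 d3 Ae) + Complex.I • commS φe (Em d1 d2 d3 Am) -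
    Complex.I • (cross (Ee d0 d1 d2 d3 φe Ae) Am + cross Am (Ee d0 d1 d2 d3 φe Ae) +
      cross (Bm d0 d1 d2 d3 φm Am) Ae + cross Ae (Bm d0 d1 d2 d3 φm Am))

/-- `ρ^e := i[A^{m*}, D^e + H^m]`. -/
def rhoE (d0 d1 d2 d3 : B → B) (φe : B) (Ae : B × B × B) (φm : B) (Am : B × B × B) : B :=
  Complex.I • commV (starV Am)
    (De d0 d1 d2 d3 φe Ae φm Am + Hm d0 d1 d2 d3 φe Ae φm Am)

/-- `ρ^m := i[A^{e*}, D^e + H^m]`. -/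
def rhoM (d0 d1 d2 d3 : B → B) (φe : B) (Ae : B × B × B) (φm : B) (Am : B × B × B) : B :=
  Complex.I • commV (starV Ae)
    (De d0 d1 d2 d3 φe Ae φm Am + Hm d0 d1 d2 d3 φe Ae φm Am)

/-- `-j^e := i[D^e + H^m, φ^{m*}] + i((H^e + D^m)×A^{m*} + A^{m*}×(H^e + D^m))`. -/
def negjE (d0 d1 d2 d3 : B → B) (φe : B) (Ae : B × B × B) (φm : B) (Am : B × B × B) :
    B × B × B :=
  Complex.I • commR (De d0 d1 d2 d3 φe Ae φm Am + Hm d0 d1 d2 d3 φe Ae φm Am)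
      (star φm) +
    Complex.I • (cross (He d1 d2 d3 Ae Am + Dm d1 d2 d3 Ae Am) (starV Am) +
      cross (starV Am) (He d1 d2 d3 Ae Am + Dm d1 d2 d3 Ae Am))

/-- `-j^m := i[D^e + H^m, φ^{e*}] + i((H^e + D^m)×A^{e*} + A^{e*}×(H^e + D^m))`. -/
def negjM (d0 d1 d2 d3 : B → B) (φe : B) (Ae : B × B × B) (φm : B) (Am : B × B × B) :
    B × B × B :=
  Complex.I • commR (De d0 d1 d2 d3 φe Ae φm Am + Hm d0 d1 d2 d3 φe Ae φm Am)
      (star φe) +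
    Complex.I • (cross (He d1 d2 d3 Ae Am + Dm d1 d2 d3 Ae Am) (starV Ae) +
      cross (starV Ae) (He d1 d2 d3 Ae Am + Dm d1 d2 d3 Ae Am))

end TwoPhoton

namespace TwoPhoton

section Fields

variable {B : Type*} [Ring B] (d0 d1 d2 d3 : B → B) (φe φm : B) (Ae Am : B × B × B)

theorem Ee_eq_Bm : Ee d0 d1 d2 d3 = Bm d0 d1 d2 d3 := rfl

theorem Be_eq_Em : Be d1 d2 d3 = Em d1 d2 d3 := rfl

theorem Kv_swap : Kv φm φe Am Ae = Kv φe φm Ae Am := add_comm _ _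

theorem Cv_swap : Cv Am Ae = Cv Ae Am := add_comm _ _

variable [Algebra ℂ B]

theorem De_swap : De d0 d1 d2 d3 φm Am φe Ae = Hm d0 d1 d2 d3 φe Ae φm Am := by
  rw [De, Hm, Kv_swap, Ee_eq_Bm]

theorem He_swap : He d1 d2 d3 Am Ae = Dm d1 d2 d3 Ae Am := by
  rw [He, Dm, Cv_swap, Be_eq_Em]

theorem De_add_Hm_swap :
    De d0 d1 d2 d3 φm Am φe Ae + Hm d0 d1 d2 d3 φm Am φe Ae =
      De d0 d1 d2 d3 φe Ae φm Am + Hm d0 d1 d2 d3 φe Ae φm Am := by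
  rw [De_swap d0 d1 d2 d3 φe φm Ae Am, ← De_swap d0 d1 d2 d3 φm φe Am Ae, add_comm]

theorem He_add_Dm_swap :
    He d1 d2 d3 Am Ae + Dm d1 d2 d3 Am Ae = He d1 d2 d3 Ae Am + Dm d1 d2 d3 Ae Am := by
  rw [He_swap d1 d2 d3 Ae Am, ← He_swap d1 d2 d3 Am Ae, add_comm]

theorem rho_swap : rho d1 d2 d3 Am Ae = rho d1 d2 d3 Ae Am := by
  rw [rho, rho, Be_eq_Em, add_comm]

theorem negj_swap : negj d0 d1 d2 d3 φm Am φe Ae = negj d0 d1 d2 d3 φe Ae φm Am := by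
  rw [negj, negj, Be_eq_Em, ← Ee_eq_Bm, add_comm (Complex.I • commS φe _)]
  abel_nf

end Fields

section Sources

variable {B : Type*} [Ring B] [Algebra ℂ B] [StarRing B] (d0 d1 d2 d3 : B → B) (φe φm : B)
  (Ae Am : B × B × B)

theorem rhoE_swap : rhoE d0 d1 d2 d3 φm Am φe Ae = rhoM d0 d1 d2 d3 φe Ae φm Am := by
  rw [rhoE, rhoM, De_add_Hm_swap]

theorem negjE_swap : negjE d0 d1 d2 d3 φm Am φe Ae = negjM d0 d1 d2 d3 φe Ae φm Am := by
  rw [negjE, negjM, De_add_Hm_swap, He_add_Dm_swap]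

theorem nc_two_photon_duality_general {B : Type*} [Ring B] [Algebra ℂ B] [StarRing B]
    (d0 d1 d2 d3 : B → B)
    (φe φm : B) (Ae Am : B × B × B) :
    De d0 d1 d2 d3 φm Am φe Ae = Hm d0 d1 d2 d3 φe Ae φm Am ∧
    He d1 d2 d3 Am Ae = Dm d1 d2 d3 Ae Am ∧
    Hm d0 d1 d2 d3 φm Am φe Ae = De d0 d1 d2 d3 φe Ae φm Am ∧
    Dm d1 d2 d3 Am Ae = He d1 d2 d3 Ae Am ∧
    rho d1 d2 d3 Am Ae = rho d1 d2 d3 Ae Am ∧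
    negj d0 d1 d2 d3 φm Am φe Ae = negj d0 d1 d2 d3 φe Ae φm Am ∧
    rhoE d0 d1 d2 d3 φm Am φe Ae = rhoM d0 d1 d2 d3 φe Ae φm Am ∧
    negjE d0 d1 d2 d3 φm Am φe Ae = negjM d0 d1 d2 d3 φe Ae φm Am ∧
    rhoM d0 d1 d2 d3 φm Am φe Ae = rhoE d0 d1 d2 d3 φe Ae φm Am ∧
    negjM d0 d1 d2 d3 φm Am φe Ae = negjE d0 d1 d2 d3 φe Ae φm Am :=
  ⟨De_swap .., He_swap .., (De_swap ..).symm, (He_swap ..).symm, rho_swap .., negj_swap ..,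
    rhoE_swap .., negjE_swap .., (rhoE_swap ..).symm, (negjE_swap ..).symm⟩

/-- **ℤ₂ electric–magnetic duality of the two-photon model**: under the swap of
potentials `(φ^e,A^e,φ^m,A^m) ↦ (φ^m,A^m,φ^e,A^e)` (primed fields/sources), one
has `D^e′ = H^m`, `H^e′ = D^m`, `H^m′ = D^e`, `D^m′ = H^e`, `ρ′ = ρ`, `j′ = j`,
`ρ^e′ = ρ^m`, `j^e′ = j^m`, `ρ^m′ = ρ^e`, `j^m′ = j^e`. -/
theorem nc_two_photon_duality {B : Type*} [Ring B] [Algebra ℂ B] [StarRing B]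
    (d0 d1 d2 d3 : B → B)
    (h0 : IsDer d0) (h1 : IsDer d1) (h2 : IsDer d2) (h3 : IsDer d3)
    (hcomm : ∀ δ ∈ [d0, d1, d2, d3], ∀ δ' ∈ [d0, d1, d2, d3], ∀ x : B,
      δ (δ' x) = δ' (δ x))
    (hstar : ∀ δ ∈ [d0, d1, d2, d3], ∀ b : B, δ (star b) = star (δ b))
    (φe φm : B) (Ae Am : B × B × B) :
    De d0 d1 d2 d3 φm Am φe Ae = Hm d0 d1 d2 d3 φe Ae φm Am ∧
    He d1 d2 d3 Am Ae = Dm d1 d2 d3 Ae Am ∧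
    Hm d0 d1 d2 d3 φm Am φe Ae = De d0 d1 d2 d3 φe Ae φm Am ∧
    Dm d1 d2 d3 Am Ae = He d1 d2 d3 Ae Am ∧
    rho d1 d2 d3 Am Ae = rho d1 d2 d3 Ae Am ∧
    negj d0 d1 d2 d3 φm Am φe Ae = negj d0 d1 d2 d3 φe Ae φm Am ∧
    rhoE d0 d1 d2 d3 φm Am φe Ae = rhoM d0 d1 d2 d3 φe Ae φm Am ∧
    negjE d0 d1 d2 d3 φm Am φe Ae = negjM d0 d1 d2 d3 φe Ae φm Am ∧
    rhoM d0 d1 d2 d3 φm Am φe Ae = rhoE d0 d1 d2 d3 φe Ae φm Am ∧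
    negjM d0 d1 d2 d3 φm Am φe Ae = negjE d0 d1 d2 d3 φe Ae φm Am :=
  nc_two_photon_duality_general d0 d1 d2 d3 φe φm Ae Am

end Sources

end TwoPhoton

end NC
end
end
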